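/- arXiv:2203.16686 — 3 statements merged into one kernel-verified Lean document; each statement's English description precedes it below -/
import Mathlib

section
/- For the function G_w(x, z; y) = f(x) + yᵀ(Ax − b) + zᵀ W y with W symmetric, a point (x*, z*, y*) is a saddle point (min over (x,z), max over y) if and only if: ∇f(x*) + Aᵀy* = 0, W y* = 0, and Ax* − b + W z* = 0. -/
open Matrix

section Aux

variable {k l : ℕ}

private lemma aux_inner (M : Matrix (Fin k) (Fin l) ℝ) (x : EuclideanSpace ℝ (Fin l))
    (y : EuclideanSpace ℝ (Fin k)) :
    inner (𝕜 := ℝ) y (Matrix.toEuclideanLin M x) =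
      inner (𝕜 := ℝ) (Matrix.toEuclideanLin Mᵀ y) x := by
  have hMT : Mᵀ = Mᴴ := by
    ext i j; simp [Matrix.conjTranspose_apply]
  rw [hMT, Matrix.toEuclideanLin_conjTranspose_eq_adjoint, LinearMap.adjoint_inner_left]

private lemma convex_first_order {f : EuclideanSpace ℝ (Fin l) → ℝ}
    (hconv : ConvexOn ℝ Set.univ f) {g xs : EuclideanSpace ℝ (Fin l)}
    (hg : HasGradientAt f g xs) (x : EuclideanSpace ℝ (Fin l)) :
    f xs + inner (𝕜 := ℝ) g (x - xs) ≤ f x := by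
  set φ : ℝ → ℝ := f ∘ (AffineMap.lineMap xs x) with hφ
  have hφconv : ConvexOn ℝ Set.univ φ := by
    have := hconv.comp_affineMap (AffineMap.lineMap xs x)
    simpa using this
  have hline : HasDerivAt (fun t : ℝ => (AffineMap.lineMap xs x) t) (x - xs) 0 := by
    have h0 : HasDerivAt (fun t : ℝ => t • (x - xs) + xs) (x - xs) 0 := by
      simpa using ((hasDerivAt_id (0:ℝ)).smul_const (x - xs)).add_const xs
    have he : (fun t : ℝ => (AffineMap.lineMap xs x) t)
        = fun t : ℝ => t • (x - xs) + xs := by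
      funext t
      simp only [AffineMap.lineMap_apply_module]
      module
    rw [he]
    exact h0
  have hF : HasFDerivAt f (InnerProductSpace.toDual ℝ _ g) xs :=
    hasGradientAt_iff_hasFDerivAt.mp hg
  have hF' : HasFDerivAt f (InnerProductSpace.toDual ℝ _ g) ((AffineMap.lineMap xs x) (0:ℝ)) := by
    simpa using hF
  have hφderiv : HasDerivAt φ (inner (𝕜 := ℝ) g (x - xs)) 0 := by
    have := hF'.comp_hasDerivAt (0:ℝ) hline
    simpa [InnerProductSpace.toDual_apply_apply] using this
  have hslope := hφconv.le_slope_of_hasDerivAt (Set.mem_univ (0:ℝ)) (Set.mem_univ (1:ℝ))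
    zero_lt_one hφderiv
  have h0 : φ 0 = f xs := by simp [hφ]
  have h1 : φ 1 = f x := by simp [hφ]
  rw [slope_def_field] at hslope
  simp only [h0, h1] at hslope
  have : inner (𝕜 := ℝ) g (x - xs) ≤ f x - f xs := by
    simpa using hslope
  linarith

end Aux

/-- For `G_w(x, z; y) = f(x) + ⟨y, Ax − b⟩ + ⟨z, W y⟩` with `W` symmetric PSD,
`(x*, z*, y*)` is a saddle point (min over `(x,z)`, max over `y`) iff
`∇f(x*) + Aᵀ y* = 0`, `W y* = 0`, and `A x* − b + W z* = 0`. -/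
theorem saddle_point_characterization_Gw {m n : ℕ}
    (f : EuclideanSpace ℝ (Fin n) → ℝ) (A : Matrix (Fin m) (Fin n) ℝ)
    (b : EuclideanSpace ℝ (Fin m)) (W : Matrix (Fin m) (Fin m) ℝ)
    (hdiff : Differentiable ℝ f) (hconv : ConvexOn ℝ Set.univ f)
    (hsymm : W.IsSymm) (hpsd : W.PosSemidef)
    (Gw : EuclideanSpace ℝ (Fin n) → EuclideanSpace ℝ (Fin m) → EuclideanSpace ℝ (Fin m) → ℝ)
    (hGw : ∀ x z y, Gw x z y =
      f x + inner ℝ y (Matrix.toEuclideanLin A x - b) + inner ℝ z (Matrix.toEuclideanLin W y))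
    (xs zs ys : _) :
    ((∀ y, Gw xs zs y ≤ Gw xs zs ys) ∧ (∀ x z, Gw xs zs ys ≤ Gw x z ys)) ↔
      (gradient f xs + Matrix.toEuclideanLin Aᵀ ys = 0 ∧
        Matrix.toEuclideanLin W ys = 0 ∧
        Matrix.toEuclideanLin A xs - b + Matrix.toEuclideanLin W zs = 0) := by
  classical
  set p : EuclideanSpace ℝ (Fin m) :=
    Matrix.toEuclideanLin A xs - b + Matrix.toEuclideanLin W zs with hp
  set q : EuclideanSpace ℝ (Fin m) := Matrix.toEuclideanLin W ys with hq
  set c : EuclideanSpace ℝ (Fin n) := Matrix.toEuclideanLin Aᵀ ys with hc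
  -- rewrite Gw xs zs y in terms of p
  have hWsymm : Wᵀ = W := hsymm
  have hGw1 : ∀ y, Gw xs zs y = f xs + inner (𝕜 := ℝ) p y := by
    intro y
    rw [hGw]
    have h1 : inner (𝕜 := ℝ) zs (Matrix.toEuclideanLin W y)
        = inner (𝕜 := ℝ) (Matrix.toEuclideanLin W zs) y := by
      rw [aux_inner, hWsymm]
    rw [h1, hp, inner_add_left,
      real_inner_comm (Matrix.toEuclideanLin A xs - b) y]
    ring
  have hGw2 : ∀ x z, Gw x z ys =
      f x + inner (𝕜 := ℝ) c x - inner (𝕜 := ℝ) ys b + inner (𝕜 := ℝ) z q := by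
    intro x z
    rw [hGw, hq, hc]
    rw [inner_sub_right, aux_inner]
    ring
  constructor
  · rintro ⟨hmax, hmin⟩
    -- p = 0
    have hp0 : p = 0 := by
      have h := hmax (ys + p)
      rw [hGw1, hGw1, inner_add_right] at h
      have : inner (𝕜 := ℝ) p p ≤ 0 := by linarith
      have := le_antisymm this (real_inner_self_nonneg)
      exact inner_self_eq_zero.mp this
    -- q = 0
    have hq0 : q = 0 := by
      have h := hmin xs (zs - q)
      rw [hGw2, hGw2, inner_sub_left] at h
      have : inner (𝕜 := ℝ) q q ≤ 0 := by linarith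
      have := le_antisymm this (real_inner_self_nonneg)
      exact inner_self_eq_zero.mp this
    -- gradient condition
    have hr0 : gradient f xs + c = 0 := by
      set h : EuclideanSpace ℝ (Fin n) → ℝ := fun x => f x + inner (𝕜 := ℝ) c x with hhdef
      have hmin' : IsLocalMin h xs := by
        apply IsMinOn.isLocalMin _ (Filter.univ_mem)
        rw [isMinOn_iff]
        intro x _
        show f xs + inner (𝕜 := ℝ) c xs ≤ f x + inner (𝕜 := ℝ) c x
        have := hmin x zs
        rw [hGw2, hGw2] at this
        linarith
      have hfd : HasFDerivAt h
          (InnerProductSpace.toDual ℝ _ (gradient f xs) + InnerProductSpace.toDual ℝ _ c) xs := by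
        have h1 : HasFDerivAt f (InnerProductSpace.toDual ℝ _ (gradient f xs)) xs :=
          hasGradientAt_iff_hasFDerivAt.mp (hdiff xs).hasGradientAt
        have h2 : HasFDerivAt (fun x : EuclideanSpace ℝ (Fin n) => inner (𝕜 := ℝ) c x)
            (InnerProductSpace.toDual ℝ _ c) xs := by
          have := (InnerProductSpace.toDual ℝ (EuclideanSpace ℝ (Fin n)) c).hasFDerivAt (x := xs)
          convert this using 1
          funext x
          simp [InnerProductSpace.toDual_apply_apply]
        exact h1.add h2
      have hzero := hmin'.fderiv_eq_zero
      have : (InnerProductSpace.toDual ℝ _ (gradient f xs) + InnerProductSpace.toDual ℝ _ c)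
          = 0 := by
        rw [← hfd.fderiv]; exact hzero
      have h3 : InnerProductSpace.toDual ℝ (EuclideanSpace ℝ (Fin n)) (gradient f xs + c) = 0 := by
        rw [map_add]; exact this
      have := congrArg (InnerProductSpace.toDual ℝ (EuclideanSpace ℝ (Fin n))).symm h3
      simpa only [LinearIsometryEquiv.symm_apply_apply, map_zero] using this
    exact ⟨hr0, hq0, hp0⟩
  · rintro ⟨hr0, hq0, hp0⟩
    constructor
    · intro y
      rw [hGw1, hGw1, hp0]
      simp
    · intro x z
      rw [hGw2, hGw2, hq0]
      have hgrad : HasGradientAt f (gradient f xs) xs := (hdiff xs).hasGradientAt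
      have hfo := convex_first_order hconv hgrad x
      have hcg : c = -(gradient f xs) := by
        linear_combination (norm := module) hr0
      have : inner (𝕜 := ℝ) (gradient f xs) (x - xs)
          = inner (𝕜 := ℝ) (gradient f xs) x - inner (𝕜 := ℝ) (gradient f xs) xs := by
        rw [inner_sub_right]
      rw [this] at hfo
      have hcx : inner (𝕜 := ℝ) c x = -inner (𝕜 := ℝ) (gradient f xs) x := by
        rw [hcg, inner_neg_left]
      have hcxs : inner (𝕜 := ℝ) c xs = -inner (𝕜 := ℝ) (gradient f xs) xs := by
        rw [hcg, inner_neg_left]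
      simp only [inner_zero_right]
      rw [hcx, hcxs]
      linarith
end

section
/- If W is symmetric PSD with ker W = span{𝟏} and y ∈ ℝ^{l(m)} (stacked blocks y^k ∈ ℝ^m) satisfies (W ⊗ I_m)y = 0, then under this consensus all blocks of y are equal; consequently, a saddle point of the distributed problem Σ_k [f^k(x^k) + y^{kᵀ}(A^k x^k − b^k)] + zᵀ(W ⊗ I_m)y yields a saddle point of the centralized problem f(x) + yᵀ(Σ_k(A^k x^k − b^k)) with common multiplier y = y¹ = ... = y^l. -/
open Matrix Kronecker

lemma kron_one_mulVec_block {l m : ℕ} (W : Matrix (Fin l) (Fin l) ℝ)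
    (y : Fin l × Fin m → ℝ) (k : Fin l) (i : Fin m) :
    (W ⊗ₖ (1 : Matrix (Fin m) (Fin m) ℝ)).mulVec y (k, i)
      = W.mulVec (fun k' => y (k', i)) k := by
  simp [Matrix.mulVec, dotProduct, Fintype.sum_prod_type, Matrix.one_apply,
    mul_ite, mul_zero, mul_one, Finset.sum_ite_eq]

/-- If `W` is symmetric PSD with `ker W = span 𝟏` and `(W ⊗ I_m) y = 0`, then all blocks of
`y` are equal; consequently a saddle point of the distributed problem
`Σ_k [fᵏ(xᵏ) + yᵏᵀ(Aᵏ xᵏ − bᵏ)] + zᵀ (W ⊗ I_m) y` yields a saddle point of the centralized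
problem `f(x) + yᵀ Σ_k (Aᵏ xᵏ − bᵏ)` with common multiplier `y = y¹ = ⋯ = yˡ`. -/
theorem distributed_saddle_yields_centralized {l m : ℕ} (nk : Fin l → ℕ)
    (f : ∀ k : Fin l, (Fin (nk k) → ℝ) → ℝ)
    (hdiff : ∀ k, Differentiable ℝ (f k)) (hconv : ∀ k, ConvexOn ℝ Set.univ (f k))
    (A : ∀ k : Fin l, Matrix (Fin m) (Fin (nk k)) ℝ) (b : Fin l → Fin m → ℝ)
    (W : Matrix (Fin l) (Fin l) ℝ) (hsymm : W.IsSymm) (hpsd : W.PosSemidef)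
    (hker : ∀ v : Fin l → ℝ, W.mulVec v = 0 ↔ ∃ c : ℝ, ∀ k, v k = c)
    (S : (∀ k : Fin l, Fin (nk k) → ℝ) → (Fin l × Fin m → ℝ) → (Fin l × Fin m → ℝ) → ℝ)
    (hS : ∀ x z y, S x z y =
      (∑ k : Fin l, (f k (x k) + (fun i => y (k, i)) ⬝ᵥ ((A k).mulVec (x k) - b k))) +
        z ⬝ᵥ (W ⊗ₖ (1 : Matrix (Fin m) (Fin m) ℝ)).mulVec y)
    (Lc : (∀ k : Fin l, Fin (nk k) → ℝ) → (Fin m → ℝ) → ℝ)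
    (hLc : ∀ x y, Lc x y =
      (∑ k : Fin l, f k (x k)) + y ⬝ᵥ (∑ k : Fin l, ((A k).mulVec (x k) - b k))) :
    (∀ y : Fin l × Fin m → ℝ,
      (W ⊗ₖ (1 : Matrix (Fin m) (Fin m) ℝ)).mulVec y = 0 →
        ∀ k k' i, y (k, i) = y (k', i)) ∧
    (∀ xs zs ys,
      ((∀ y, S xs zs y ≤ S xs zs ys) ∧ (∀ x z, S xs zs ys ≤ S x z ys)) →
      ∃ yc : Fin m → ℝ, (∀ k i, ys (k, i) = yc i) ∧
        (∀ y, Lc xs y ≤ Lc xs yc) ∧ (∀ x, Lc xs yc ≤ Lc x yc)) := by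
  have part1 : ∀ y : Fin l × Fin m → ℝ,
      (W ⊗ₖ (1 : Matrix (Fin m) (Fin m) ℝ)).mulVec y = 0 →
        ∀ k k' i, y (k, i) = y (k', i) := by
    intro y hy k k' i
    have hv : W.mulVec (fun k'' => y (k'', i)) = 0 := by
      funext k''
      have := congrFun hy (k'', i)
      rw [kron_one_mulVec_block] at this
      simpa using this
    obtain ⟨c, hc⟩ := (hker _).1 hv
    rw [hc k, hc k']
  -- constant-block vectors lie in the kernel of W ⊗ I
  have hconst : ∀ v : Fin m → ℝ,
      (W ⊗ₖ (1 : Matrix (Fin m) (Fin m) ℝ)).mulVec (fun p => v p.2) = 0 := by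
    intro v
    funext p
    obtain ⟨k, i⟩ := p
    rw [kron_one_mulVec_block]
    have : W.mulVec (fun _ => v i) = 0 := (hker _).2 ⟨v i, fun _ => rfl⟩
    simpa using congrFun this k
  -- sum of blockwise dot products equals dot product with sum, for constant blocks
  have hsum : ∀ (v : Fin m → ℝ) (r : Fin l → Fin m → ℝ),
      (∑ k : Fin l, v ⬝ᵥ r k) = v ⬝ᵥ (∑ k : Fin l, r k) := by
    intro v r
    simp only [dotProduct, Finset.sum_apply, Finset.mul_sum]
    rw [Finset.sum_comm]
  refine ⟨part1, ?_⟩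
  intro xs zs ys ⟨hmax, hmin⟩
  -- From minimization in z: (W ⊗ I) ys = 0
  set w := (W ⊗ₖ (1 : Matrix (Fin m) (Fin m) ℝ)).mulVec ys with hwdef
  have hw : w = 0 := by
    have h1 := hmin xs (zs - w)
    rw [hS, hS] at h1
    have h2 : zs ⬝ᵥ w ≤ (zs - w) ⬝ᵥ w := by linarith
    rw [sub_dotProduct] at h2
    have h3 : w ⬝ᵥ w ≤ 0 := by linarith
    have h4 : w ⬝ᵥ w = 0 := le_antisymm h3 (Finset.sum_nonneg fun i _ => mul_self_nonneg (w i))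
    exact (dotProduct_self_eq_zero).1 h4
  cases isEmpty_or_nonempty (Fin l) with
  | inl he =>
    refine ⟨0, fun k => isEmptyElim k, ?_, ?_⟩ <;> intro u <;>
      simp [hLc, Finset.univ_eq_empty]
  | inr hne =>
    obtain ⟨k₀⟩ := hne
    refine ⟨fun i => ys (k₀, i), fun k i => part1 ys hw k k₀ i, ?_, ?_⟩
    · intro y
      have h1 := hmax (fun p => y p.2)
      rw [hS, hS, hconst y, ← hwdef, hw] at h1
      simp only [dotProduct_zero, add_zero] at h1
      rw [hLc, hLc]
      have e1 : (∑ k : Fin l, (f k (xs k) +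
          (fun i => y i) ⬝ᵥ ((A k).mulVec (xs k) - b k)))
          = (∑ k : Fin l, f k (xs k)) + y ⬝ᵥ (∑ k : Fin l, ((A k).mulVec (xs k) - b k)) := by
        rw [Finset.sum_add_distrib, hsum]
      have e2 : (∑ k : Fin l, (f k (xs k) +
          (fun i => ys (k, i)) ⬝ᵥ ((A k).mulVec (xs k) - b k)))
          = (∑ k : Fin l, f k (xs k)) +
            (fun i => ys (k₀, i)) ⬝ᵥ (∑ k : Fin l, ((A k).mulVec (xs k) - b k)) := by
        rw [Finset.sum_add_distrib, ← hsum]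
        congr 1
        refine Finset.sum_congr rfl fun k _ => ?_
        congr 1
        funext i
        exact part1 ys hw k k₀ i
      rw [e1] at h1; rw [e2] at h1
      exact h1
    · intro x
      have h1 := hmin x zs
      rw [hS, hS, ← hwdef, hw] at h1
      simp only [dotProduct_zero, add_zero] at h1
      rw [hLc, hLc]
      have e2 : ∀ xx : ∀ k : Fin l, Fin (nk k) → ℝ,
          (∑ k : Fin l, (f k (xx k) +
            (fun i => ys (k, i)) ⬝ᵥ ((A k).mulVec (xx k) - b k)))
          = (∑ k : Fin l, f k (xx k)) +
            (fun i => ys (k₀, i)) ⬝ᵥ (∑ k : Fin l, ((A k).mulVec (xx k) - b k)) := by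
        intro xx
        rw [Finset.sum_add_distrib, ← hsum]
        congr 1
        refine Finset.sum_congr rfl fun k _ => ?_
        congr 1
        funext i
        exact part1 ys hw k k₀ i
      rw [e2 xs, e2 x] at h1
      exact h1
end

section
/- Suppose a convex-concave saddle function S(u, v) on bounded convex sets U × V and iterates with ergodic average (û, v̂) satisfy the duality-gap bound max_{v ∈ V} S(û, v) − min_{u ∈ U} S(u, v̂) ≤ ε. If S(u, v) = f(u) + vᵀ(Au − b) with V = {v : ‖v‖ ≤ 2‖v*‖} containing an optimal dual v*, then f(û) − f(u*) ≤ ε and ‖v*‖ · ‖Aû − b‖ ≤ ε. -/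
open Matrix

/-!
Testing the gap at the primal optimum `u*`, where `Au* = b`, against the dual point of norm
`2‖v*‖` aligned with the residual `r = Aû − b` bounds `f(û) − f(u*) + 2‖v*‖‖r‖` by `ε`.
Since `v*` is a Lagrange multiplier, Cauchy–Schwarz gives `f(u*) − f(û) ≤ ‖v*‖‖r‖`, and the two
estimates combine to both claims.
-/

section InnerProductSpace

variable {F : Type*} [NormedAddCommGroup F] [InnerProductSpace ℝ F]

theorem add_mul_norm_le_of_forall_add_inner_le {a c ε : ℝ} {r : F} (hc : 0 ≤ c)
    (h : ∀ v : F, ‖v‖ ≤ c → a + inner ℝ v r ≤ ε) : a + c * ‖r‖ ≤ ε := by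
  rcases eq_or_ne r 0 with rfl | hr
  · simpa using h 0 (by simpa using hc)
  have hr' : 0 < ‖r‖ := norm_pos_iff.mpr hr
  have hnorm : ‖(c / ‖r‖) • r‖ = c := by
    rw [norm_smul, Real.norm_of_nonneg (by positivity), div_mul_cancel₀ _ hr'.ne']
  have hinner : inner ℝ ((c / ‖r‖) • r) r = c * ‖r‖ := by
    rw [real_inner_smul_left, real_inner_self_eq_norm_sq]
    field_simp
  simpa [hinner] using h _ hnorm.le

end InnerProductSpace

theorem gap_implies_residuals_general {m n : ℕ}
    (f : EuclideanSpace ℝ (Fin n) → ℝ) (A : Matrix (Fin m) (Fin n) ℝ)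
    (b : EuclideanSpace ℝ (Fin m)) (U : Set (EuclideanSpace ℝ (Fin n)))
    (us : EuclideanSpace ℝ (Fin n)) (vs : EuclideanSpace ℝ (Fin m))
    (husU : us ∈ U) (husfeas : Matrix.toEuclideanLin A us = b)
    (hvsopt : ∀ u ∈ U, f us ≤ f u + inner ℝ vs (Matrix.toEuclideanLin A u - b))
    (V : Set (EuclideanSpace ℝ (Fin m))) (hV : V = {v | ‖v‖ ≤ 2 * ‖vs‖})
    (uhat : EuclideanSpace ℝ (Fin n)) (vhat : EuclideanSpace ℝ (Fin m))
    (huhat : uhat ∈ U) (ε : ℝ)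
    (hgap : ∀ v ∈ V, ∀ u ∈ U,
      (f uhat + inner ℝ v (Matrix.toEuclideanLin A uhat - b)) -
        (f u + inner ℝ vhat (Matrix.toEuclideanLin A u - b)) ≤ ε) :
    f uhat - f us ≤ ε ∧ ‖vs‖ * ‖Matrix.toEuclideanLin A uhat - b‖ ≤ ε := by
  set r := Matrix.toEuclideanLin A uhat - b
  have hgap_us : ∀ v, ‖v‖ ≤ 2 * ‖vs‖ → (f uhat - f us) + inner ℝ v r ≤ ε := by
    intro v hv
    have := hgap v (hV ▸ hv) us husU
    rw [husfeas, sub_self, inner_zero_right, add_zero] at this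
    linarith
  have hprimal : f uhat - f us + 2 * ‖vs‖ * ‖r‖ ≤ ε :=
    add_mul_norm_le_of_forall_add_inner_le (by positivity) hgap_us
  have hdual : f us ≤ f uhat + ‖vs‖ * ‖r‖ :=
    (hvsopt uhat huhat).trans (by gcongr; exact real_inner_le_norm vs r)
  have hres : 0 ≤ ‖vs‖ * ‖r‖ := by positivity
  constructor <;> linarith

/-- If the ergodic iterate `(û, v̂)` of a saddle method for the Lagrangian
`S(u,v) = f(u) + ⟨v, Au − b⟩` on `U × V`, with `V = {v : ‖v‖ ≤ 2‖v*‖}` containing an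
optimal dual `v*`, has duality gap at most `ε`, then `f(û) − f(u*) ≤ ε` and
`‖v*‖ · ‖A û − b‖ ≤ ε`. -/
theorem gap_implies_residuals {m n : ℕ}
    (f : EuclideanSpace ℝ (Fin n) → ℝ) (A : Matrix (Fin m) (Fin n) ℝ)
    (b : EuclideanSpace ℝ (Fin m)) (U : Set (EuclideanSpace ℝ (Fin n)))
    (hUconv : Convex ℝ U) (hUbdd : Bornology.IsBounded U)
    (hfconv : ConvexOn ℝ U f)
    (us : EuclideanSpace ℝ (Fin n)) (vs : EuclideanSpace ℝ (Fin m))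
    (husU : us ∈ U) (husfeas : Matrix.toEuclideanLin A us = b)
    (husopt : ∀ u ∈ U, Matrix.toEuclideanLin A u = b → f us ≤ f u)
    (hvsopt : ∀ u ∈ U, f us ≤ f u + inner ℝ vs (Matrix.toEuclideanLin A u - b))
    (V : Set (EuclideanSpace ℝ (Fin m))) (hV : V = {v | ‖v‖ ≤ 2 * ‖vs‖})
    (uhat : EuclideanSpace ℝ (Fin n)) (vhat : EuclideanSpace ℝ (Fin m))
    (huhat : uhat ∈ U) (hvhat : vhat ∈ V) (ε : ℝ)
    (hgap : ∀ v ∈ V, ∀ u ∈ U,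
      (f uhat + inner ℝ v (Matrix.toEuclideanLin A uhat - b)) -
        (f u + inner ℝ vhat (Matrix.toEuclideanLin A u - b)) ≤ ε) :
    f uhat - f us ≤ ε ∧ ‖vs‖ * ‖Matrix.toEuclideanLin A uhat - b‖ ≤ ε :=
  gap_implies_residuals_general f A b U us vs husU husfeas hvsopt V hV uhat vhat huhat ε hgap
end
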